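/- arXiv:1208.0176 — 6 statements merged into one kernel-verified Lean document; each statement's English description precedes it below -/
import Mathlib

section
/- For any formula φ of dependence logic, any model 𝔄, any team X whose domain contains the free variables of φ, and any set V of variables with Fr(φ) ⊆ V ⊆ Dom(X), we have 𝔄 ⊨_X φ if and only if 𝔄 ⊨_{X↾V} φ (locality: satisfaction depends only on the free variables). -/
/-- A first-order vocabulary: function and relation symbols of each arity. -/
structure Lang where
  Func : ℕ → Type
  Rel : ℕ → Type

/-- Terms of a vocabulary, with variables indexed by `ℕ`. -/
inductive Term (L : Lang) where
  | var : ℕ → Term L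
  | func : {n : ℕ} → L.Func n → (Fin n → Term L) → Term L

/-- Formulas of dependence logic in negation normal form: first-order literals,
dependence atoms `=(t₁,…,t_{n-1}, t)`, conjunction, disjunction, quantifiers. -/
inductive Formula (L : Lang) where
  | rel : {n : ℕ} → L.Rel n → (Fin n → Term L) → Formula L
  | nrel : {n : ℕ} → L.Rel n → (Fin n → Term L) → Formula L
  | eq : Term L → Term L → Formula L
  | neq : Term L → Term L → Formula L
  | dep : List (Term L) → Term L → Formula L
  | and : Formula L → Formula L → Formula L
  | or : Formula L → Formula L → Formula L
  | ex : ℕ → Formula L → Formula L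
  | all : ℕ → Formula L → Formula L

/-- A structure (model) for the vocabulary `L` with domain `A`. -/
structure Struc (L : Lang) (A : Type*) where
  funcs : {n : ℕ} → L.Func n → (Fin n → A) → A
  rels : {n : ℕ} → L.Rel n → (Fin n → A) → Prop

variable {L : Lang} {A : Type*}

/-- Value `t^𝔄⟨s⟩` of a term under an assignment. -/
def Term.eval (M : Struc L A) (s : ℕ → A) : Term L → A
  | .var v => s v
  | .func f ts => M.funcs f fun i => (ts i).eval M s

/-- Variables occurring in a term. -/
def Term.vars : Term L → Finset ℕ
  | .var v => {v}
  | .func _ ts => Finset.univ.biUnion fun i => (ts i).vars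

/-- Free variables of a formula. -/
def Formula.fv : Formula L → Finset ℕ
  | .rel _ ts => Finset.univ.biUnion fun i => (ts i).vars
  | .nrel _ ts => Finset.univ.biUnion fun i => (ts i).vars
  | .eq t u => t.vars ∪ u.vars
  | .neq t u => t.vars ∪ u.vars
  | .dep ts t => ts.foldr (fun u s => u.vars ∪ s) t.vars
  | .and φ ψ => φ.fv ∪ ψ.fv
  | .or φ ψ => φ.fv ∪ ψ.fv
  | .ex x φ => φ.fv.erase x
  | .all x φ => φ.fv.erase x

/-- A formula is first-order if it contains no dependence atoms. -/
def Formula.IsFO : Formula L → Prop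
  | .rel _ _ => True
  | .nrel _ _ => True
  | .eq _ _ => True
  | .neq _ _ => True
  | .dep _ _ => False
  | .and φ ψ => φ.IsFO ∧ ψ.IsFO
  | .or φ ψ => φ.IsFO ∧ ψ.IsFO
  | .ex _ φ => φ.IsFO
  | .all _ φ => φ.IsFO

/-- Team semantics of dependence logic.  A team is a set of assignments `ℕ → A`. -/
def TSat (M : Struc L A) : Formula L → Set (ℕ → A) → Prop
  | .rel R ts => fun X => ∀ s ∈ X, M.rels R fun i => (ts i).eval M s
  | .nrel R ts => fun X => ∀ s ∈ X, ¬ M.rels R fun i => (ts i).eval M s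
  | .eq t u => fun X => ∀ s ∈ X, t.eval M s = u.eval M s
  | .neq t u => fun X => ∀ s ∈ X, t.eval M s ≠ u.eval M s
  | .dep ts t => fun X => ∀ s ∈ X, ∀ s' ∈ X,
      (∀ u ∈ ts, u.eval M s = u.eval M s') → t.eval M s = t.eval M s'
  | .and φ ψ => fun X => TSat M φ X ∧ TSat M ψ X
  | .or φ ψ => fun X => ∃ Y Z, X = Y ∪ Z ∧ TSat M φ Y ∧ TSat M ψ Z
  | .ex x φ => fun X => ∃ F : (ℕ → A) → A,
      TSat M φ ((fun s => Function.update s x (F s)) '' X)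
  | .all x φ => fun X =>
      TSat M φ {s' | ∃ s ∈ X, ∃ a : A, s' = Function.update s x a}

/-- Ordinary (Tarskian) satisfaction of a formula by a single assignment
(dependence atoms are read as trivially true; we only use this for
first-order formulas). -/
def Sat (M : Struc L A) (s : ℕ → A) : Formula L → Prop
  | .rel R ts => M.rels R fun i => (ts i).eval M s
  | .nrel R ts => ¬ M.rels R fun i => (ts i).eval M s
  | .eq t u => t.eval M s = u.eval M s
  | .neq t u => t.eval M s ≠ u.eval M s
  | .dep _ _ => True
  | .and φ ψ => Sat M s φ ∧ Sat M s ψ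
  | .or φ ψ => Sat M s φ ∨ Sat M s ψ
  | .ex x φ => ∃ a : A, Sat M (Function.update s x a) φ
  | .all x φ => ∀ a : A, Sat M (Function.update s x a) φ


/-- The team `X↾V`: all assignments agreeing on `V` with some member of `X`. -/
def restrictTeam (X : Set (ℕ → A)) (V : Finset ℕ) : Set (ℕ → A) :=
  {s₂ | ∃ s ∈ X, ∀ v ∈ V, s₂ v = s v}

/-!
Locality is proved by induction on `φ` in a one-sided, stronger form: if every assignment of `Y`
agrees on `V ⊇ Fr(φ)` with some assignment of a team `X` satisfying `φ`, then `Y` satisfies `φ`.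
For a disjunction `X = X₁ ∪ X₂`, `Y` is split according to which of `X₁`, `X₂` supplies the
agreeing assignment; for `∃x`, the new choice function evaluates the old one at a chosen agreeing
assignment of `X`.
-/

theorem Term.eval_congr (M : Struc L A) {s s' : ℕ → A} :
    ∀ t : Term L, (∀ v ∈ t.vars, s v = s' v) → t.eval M s = t.eval M s'
  | .var v, h => h v (Finset.mem_singleton_self v)
  | .func f ts, h => congrArg (M.funcs f) <| funext fun i =>
      Term.eval_congr M (ts i) fun v hv =>
        h v (Finset.mem_biUnion.2 ⟨i, Finset.mem_univ i, hv⟩)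

theorem Term.eval_congr_of_subset (M : Struc L A) {t : Term L} {V : Finset ℕ} {s s' : ℕ → A}
    (hV : t.vars ⊆ V) (h : ∀ v ∈ V, s v = s' v) : t.eval M s = t.eval M s' :=
  t.eval_congr M fun v hv => h v (hV hv)

theorem Term.eval_comp_congr_of_subset (M : Struc L A) {n : ℕ} {ts : Fin n → Term L}
    {V : Finset ℕ} {s s' : ℕ → A} (hV : (Finset.univ.biUnion fun i => (ts i).vars) ⊆ V)
    (h : ∀ v ∈ V, s v = s' v) : (fun i => (ts i).eval M s) = fun i => (ts i).eval M s' :=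
  funext fun i => Term.eval_congr_of_subset M
    ((Finset.subset_biUnion_of_mem (fun i => (ts i).vars) (Finset.mem_univ i)).trans hV) h

theorem Formula.mem_fv_dep {ts : List (Term L)} {t : Term L} {v : ℕ} :
    v ∈ (Formula.dep ts t).fv ↔ v ∈ t.vars ∨ ∃ u ∈ ts, v ∈ u.vars := by
  induction ts with
  | nil => simp [Formula.fv]
  | cons w us ih =>
    simp only [Formula.fv, List.foldr, Finset.mem_union] at ih ⊢
    rw [ih]
    simp only [List.mem_cons, exists_eq_or_imp]
    tauto

theorem subset_restrictTeam (X : Set (ℕ → A)) (V : Finset ℕ) : X ⊆ restrictTeam X V :=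
  fun s hs => ⟨s, hs, fun _ _ => rfl⟩

theorem update_mem_restrictTeam_insert {X : Set (ℕ → A)} {V : Finset ℕ} {s t : ℕ → A} {x : ℕ}
    {a : A} (hs : Function.update s x a ∈ X) (h : ∀ v ∈ V, t v = s v) :
    Function.update t x a ∈ restrictTeam X (insert x V) := by
  refine ⟨Function.update s x a, hs, fun v hv => ?_⟩
  rcases eq_or_ne v x with rfl | hvx
  · simp
  · simp only [Function.update_of_ne hvx]
    exact h v (Finset.mem_of_mem_insert_of_ne hv hvx)

theorem exists_witness_of_subset_restrictTeam {X Y : Set (ℕ → A)} {V : Finset ℕ}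
    (hY : Y ⊆ restrictTeam X V) :
    ∃ p : (ℕ → A) → (ℕ → A), ∀ t ∈ Y, p t ∈ X ∧ ∀ v ∈ V, t v = p t v := by
  classical
  refine ⟨fun t => if h : ∃ s ∈ X, ∀ v ∈ V, t v = s v then h.choose else t, fun t ht => ?_⟩
  have hs : ∃ s ∈ X, ∀ v ∈ V, t v = s v := hY ht
  simp only [dif_pos hs]
  exact hs.choose_spec

theorem TSat.of_subset_restrictTeam (M : Struc L A) {φ : Formula L} {V : Finset ℕ}
    {X Y : Set (ℕ → A)} (hV : φ.fv ⊆ V) (hY : Y ⊆ restrictTeam X V) (h : TSat M φ X) :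
    TSat M φ Y := by
  induction φ generalizing V X Y with
  | rel R ts | nrel R ts =>
    intro t ht
    obtain ⟨s, hs, hts⟩ := hY ht
    simpa only [Term.eval_comp_congr_of_subset M hV hts] using h s hs
  | eq t u | neq t u =>
    intro r hr
    obtain ⟨s, hs, hrs⟩ := hY hr
    have ⟨htV, huV⟩ := Finset.union_subset_iff.1 hV
    rw [Term.eval_congr_of_subset M htV hrs, Term.eval_congr_of_subset M huV hrs]
    exact h s hs
  | dep ts t =>
    intro r₁ hr₁ r₂ hr₂ hargs
    obtain ⟨s₁, hs₁, hrs₁⟩ := hY hr₁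
    obtain ⟨s₂, hs₂, hrs₂⟩ := hY hr₂
    have htV : t.vars ⊆ V := fun v hv => hV (Formula.mem_fv_dep.2 (.inl hv))
    have huV : ∀ u ∈ ts, u.vars ⊆ V := fun u hu v hv =>
      hV (Formula.mem_fv_dep.2 (.inr ⟨u, hu, hv⟩))
    rw [Term.eval_congr_of_subset M htV hrs₁, Term.eval_congr_of_subset M htV hrs₂]
    refine h s₁ hs₁ s₂ hs₂ fun u hu => ?_
    rw [← Term.eval_congr_of_subset M (huV u hu) hrs₁,
      ← Term.eval_congr_of_subset M (huV u hu) hrs₂]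
    exact hargs u hu
  | and φ ψ ihφ ihψ =>
    have ⟨hφV, hψV⟩ := Finset.union_subset_iff.1 hV
    exact ⟨ihφ hφV hY h.1, ihψ hψV hY h.2⟩
  | or φ ψ ihφ ihψ =>
    have ⟨hφV, hψV⟩ := Finset.union_subset_iff.1 hV
    obtain ⟨X₁, X₂, rfl, h₁, h₂⟩ := h
    refine ⟨Y ∩ restrictTeam X₁ V, Y ∩ restrictTeam X₂ V, ?_,
      ihφ hφV Set.inter_subset_right h₁, ihψ hψV Set.inter_subset_right h₂⟩
    ext t
    constructor
    · intro ht
      obtain ⟨s, hs | hs, hts⟩ := hY ht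
      exacts [.inl ⟨ht, s, hs, hts⟩, .inr ⟨ht, s, hs, hts⟩]
    · rintro (⟨ht, -⟩ | ⟨ht, -⟩) <;> exact ht
  | ex x φ ih =>
    obtain ⟨F, hF⟩ := h
    obtain ⟨p, hp⟩ := exists_witness_of_subset_restrictTeam hY
    refine ⟨F ∘ p, ih (Finset.subset_insert_iff.2 hV) ?_ hF⟩
    rintro _ ⟨t, ht, rfl⟩
    exact update_mem_restrictTeam_insert ⟨p t, (hp t ht).1, rfl⟩ (hp t ht).2
  | all x φ ih =>
    refine ih (Finset.subset_insert_iff.2 hV) ?_ h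
    rintro _ ⟨t, ht, a, rfl⟩
    obtain ⟨s, hs, hts⟩ := hY ht
    exact update_mem_restrictTeam_insert ⟨s, hs, a, rfl⟩ hts

/-- Locality: satisfaction of a dependence logic formula by a team depends
only on the values of the free variables. -/
theorem locality (M : Struc L A) (φ : Formula L) (X : Set (ℕ → A)) (V : Finset ℕ)
    (hV : φ.fv ⊆ V) : TSat M φ X ↔ TSat M φ (restrictTeam X V) :=
  ⟨TSat.of_subset_restrictTeam M hV subset_rfl,
    TSat.of_subset_restrictTeam M hV ((subset_restrictTeam X V).trans (subset_restrictTeam _ V))⟩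
end

section
/- The sentence φ := ∀x ∃y ∃z(=(y,z) ∧ (x = z ∧ y ≠ c)) of dependence logic is true in a model 𝔄 (with constant c) if and only if the domain A is infinite. -/
variable {L : Lang} {A : Type*}

/-- A vocabulary with a single constant symbol `c` and nothing else. -/
def constLang : Lang where
  Func := fun n => match n with | 0 => Unit | _ => Empty
  Rel := fun _ => Empty

/-- The constant term `c`. -/
def cTerm : Term constLang := .func (n := 0) () Fin.elim0

/-- The sentence `φ = ∀x ∃y ∃z (=(y,z) ∧ (x = z ∧ y ≠ c))` (with `x,y,z` the
variables `0,1,2`). -/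
def phiInf : Formula constLang :=
  .all 0 (.ex 1 (.ex 2 (.and (.dep [.var 1] (.var 2))
    (.and (.eq (.var 0) (.var 2)) (.neq (.var 1) cTerm)))))

/-! Unfolding the quantifiers, `φ` holds iff there are witness functions `G, H : A → A` for `y, z`
with `H = id` (from `x = z`), `G a ≠ c` and `G a = G b → H a = H b` (from `=(y,z)`), that is, iff
some injection `A → A` misses `c`. Such an injection exists exactly when `A` is Dedekind-infinite,
which in the presence of choice means infinite. -/

open Function Set

theorem exists_injective_forall_ne_iff_infinite {α : Type*} (c : α) :
    (∃ g : α → α, Injective g ∧ ∀ a, g a ≠ c) ↔ Infinite α := by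
  constructor
  · rintro ⟨g, hg, hc⟩
    by_contra hfin
    have := not_infinite_iff_finite.mp hfin
    obtain ⟨a, ha⟩ := Finite.injective_iff_surjective.mp hg c
    exact hc a ha
  · intro _
    obtain ⟨e⟩ := Cardinal.eq.mp (Cardinal.mk_compl_finset_of_infinite {c}).symm
    refine ⟨fun a => e a, Subtype.val_injective.comp e.injective, fun a => ?_⟩
    simpa using (e a).2

section TeamSemantics

variable {L : Lang} {A : Type*} (M : Struc L A)

theorem tSat_all_singleton (x : ℕ) (φ : Formula L) (s : ℕ → A) :
    TSat M (.all x φ) {s} ↔ TSat M φ (range fun a => update s x a) := by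
  simp only [TSat, mem_singleton_iff, exists_eq_left]
  congr! 2
  ext t
  simp [eq_comm]

theorem tSat_ex_range_of_injective {ι : Type*} {f : ι → ℕ → A} (hf : Injective f)
    (x : ℕ) (φ : Formula L) :
    TSat M (.ex x φ) (range f) ↔
      ∃ g : ι → A, TSat M φ (range fun i => update (f i) x (g i)) := by
  simp only [TSat, ← range_comp]
  constructor
  · rintro ⟨F, hF⟩
    exact ⟨F ∘ f, hF⟩
  · rintro ⟨g, hg⟩
    refine ⟨extend f g (· x), ?_⟩
    simpa [comp_def, hf.extend_apply] using hg

end TeamSemantics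

theorem cTerm_eval {A : Type*} (M : Struc constLang A) (s : ℕ → A) :
    cTerm.eval M s = M.funcs (n := 0) () Fin.elim0 :=
  congrArg (M.funcs (n := 0) ()) (Subsingleton.elim _ _)

theorem tSat_phiInf_iff {A : Type*} (M : Struc constLang A) (s : ℕ → A) :
    TSat M phiInf {s} ↔
      ∃ g : A → A, Injective g ∧ ∀ a, g a ≠ M.funcs (n := 0) () Fin.elim0 := by
  have hxy : ∀ g : A → A, Injective fun a => update (update s 0 a) 1 (g a) :=
    fun g a b h => by simpa using congrFun h 0
  rw [phiInf, tSat_all_singleton, tSat_ex_range_of_injective M (update_injective s 0)]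
  simp only [fun g => tSat_ex_range_of_injective M (hxy g)]
  simp only [TSat, forall_mem_range, Term.eval, cTerm_eval, List.mem_singleton, forall_eq,
    update_apply, Nat.reduceEqDiff, if_true, if_false]
  constructor
  · rintro ⟨g, h, hdep, hid, hc⟩
    refine ⟨g, fun a b hab => ?_, hc⟩
    rw [hid a, hid b]
    exact hdep a b hab
  · rintro ⟨g, hg, hc⟩
    exact ⟨g, id, fun a b hab => hg hab, fun _ => rfl, hc⟩

/-- `φ` is true in a model `𝔄` with a constant `c` iff the domain is
infinite. -/
theorem phiInf_iff_infinite {A : Type*} (M : Struc constLang A) (s : ℕ → A) :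
    TSat M phiInf {s} ↔ Infinite A := by
  rw [tSat_phiInf_iff, exists_injective_forall_ne_iff_infinite]
end

section
/- Soundness of disjunction elimination restricted to first-order conclusions: if 𝔄 ⊨_X A ∨ B (team semantics), C is a first-order formula, and both (for all teams Y, 𝔄 ⊨_Y A implies 𝔄 ⊨_Y C) and (for all teams Z, 𝔄 ⊨_Z B implies 𝔄 ⊨_Z C), then 𝔄 ⊨_X C. -/
variable {L : Lang} {A : Type*}

/-! First-order formulas are flat: a team satisfies one exactly when each of its assignments
does. Flat formulas are therefore preserved under unions of teams, so applying the two hypotheses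
to the halves `Y ∪ Z = X` of a split witnessing `A ∨ B` gives `C` on `X`. -/

theorem Formula.IsFO.tSat_iff (M : Struc L A) :
    ∀ {C : Formula L}, C.IsFO → ∀ X : Set (ℕ → A), (TSat M C X ↔ ∀ s ∈ X, Sat M s C)
  | .rel _ _, _, _ => Iff.rfl
  | .nrel _ _, _, _ => Iff.rfl
  | .eq _ _, _, _ => Iff.rfl
  | .neq _ _, _, _ => Iff.rfl
  | .and φ ψ, h, X => by
    simp only [TSat, Sat, h.1.tSat_iff M, h.2.tSat_iff M]
    exact forall₂_and.symm
  | .or φ ψ, h, X => by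
    simp only [TSat, Sat]
    constructor
    · rintro ⟨Y, Z, rfl, hY, hZ⟩ s (hs | hs)
      · exact .inl ((h.1.tSat_iff M Y).mp hY s hs)
      · exact .inr ((h.2.tSat_iff M Z).mp hZ s hs)
    · intro hX
      refine ⟨{s ∈ X | Sat M s φ}, {s ∈ X | Sat M s ψ}, ?_, ?_, ?_⟩
      · rw [← Set.sep_or, Set.sep_eq_self_iff_mem_true.mpr hX]
      · exact (h.1.tSat_iff M _).mpr fun s hs => hs.2
      · exact (h.2.tSat_iff M _).mpr fun s hs => hs.2
  | .ex x φ, (h : φ.IsFO), X => by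
    simp only [TSat, Sat, h.tSat_iff M, Set.forall_mem_image]
    constructor
    · rintro ⟨F, hF⟩ s hs
      exact ⟨F s, hF hs⟩
    · intro hX
      choose F hF using hX
      classical
      refine ⟨fun s => if hs : s ∈ X then F s hs else s x, fun s hs => ?_⟩
      simpa only [dif_pos hs] using hF s hs
  | .all x φ, (h : φ.IsFO), X => by
    simp only [TSat, Sat, h.tSat_iff M]
    constructor
    · intro hX s hs a
      exact hX _ ⟨s, hs, a, rfl⟩
    · rintro hX _ ⟨s, hs, a, rfl⟩
      exact hX s hs a

theorem Formula.IsFO.tSat_union {M : Struc L A} {C : Formula L} (hC : C.IsFO)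
    {Y Z : Set (ℕ → A)} (hY : TSat M C Y) (hZ : TSat M C Z) : TSat M C (Y ∪ Z) := by
  rw [hC.tSat_iff] at hY hZ ⊢
  rintro s (hs | hs)
  exacts [hY s hs, hZ s hs]

/-- Soundness of disjunction elimination for first-order conclusions:
if `𝔄 ⊨_X A ∨ B`, `C` is first-order, every team satisfying `A` satisfies
`C`, and every team satisfying `B` satisfies `C`, then `𝔄 ⊨_X C`. -/
theorem or_elim_sound (M : Struc L A) (φ ψ C : Formula L) (X : Set (ℕ → A))
    (hFO : C.IsFO)
    (hor : TSat M (.or φ ψ) X)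
    (hA : ∀ Y : Set (ℕ → A), TSat M φ Y → TSat M C Y)
    (hB : ∀ Z : Set (ℕ → A), TSat M ψ Z → TSat M C Z) :
    TSat M C X := by
  obtain ⟨Y, Z, rfl, hY, hZ⟩ := hor
  exact hFO.tSat_union (hA Y hY) (hB Z hZ)
end

section
/- If a Σ¹₁ sentence φ of the normal form ∀x⃗ ∃y⃗ (⋀ⱼ =(w⃗^{iⱼ}, y_{iⱼ}) ∧ ψ(x⃗,y⃗)) (ψ quantifier-free first-order) is true in a model 𝔄 (team semantics), then player II has a winning strategy in the associated infinite game G(𝔄,Φ): players alternately pick tuples a⃗ₙ ∈ A^m (player I) and b⃗ₙ ∈ A^n (player II), and II wins an infinite play iff for all n: ψ(a⃗ₙ, b⃗ₙ) holds and for all i < n and each dependence atom =(w⃗^p, y_p) in S, if the w⃗^p-values at rounds i and n agree then the y_p-values agree. -/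
variable {A : Type*} {m n : ℕ}

def wVal (wIdx : Fin n → List (Fin m ⊕ Fin n)) (p : Fin n)
    (a : Fin m → A) (b : Fin n → A) : List A :=
  (wIdx p).map (Sum.elim a b)

def WF (wIdx : Fin n → List (Fin m ⊕ Fin n)) : Prop :=
  ∀ p : Fin n, ∀ q : Fin n, Sum.inr q ∈ wIdx p → q < p

def TeamTrue (ψ : (Fin m → A) → (Fin n → A) → Prop)
    (wIdx : Fin n → List (Fin m ⊕ Fin n)) : Prop :=
  ∃ f : (Fin m → A) → (Fin n → A),
    (∀ a, ψ a (f a)) ∧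
    ∀ p : Fin n, ∀ a a' : Fin m → A,
      wVal wIdx p a (f a) = wVal wIdx p a' (f a') → f a p = f a' p

def playII (σ : List (Fin m → A) → (Fin n → A)) (x : ℕ → Fin m → A)
    (k : ℕ) : Fin n → A :=
  σ ((List.range (k + 1)).map x)

def WinningII (ψ : (Fin m → A) → (Fin n → A) → Prop)
    (wIdx : Fin n → List (Fin m ⊕ Fin n))
    (σ : List (Fin m → A) → (Fin n → A)) : Prop :=
  ∀ x : ℕ → Fin m → A, ∀ k : ℕ,
    ψ (x k) (playII σ x k) ∧
    ∀ i < k, ∀ p : Fin n,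
      wVal wIdx p (x i) (playII σ x i) = wVal wIdx p (x k) (playII σ x k) →
      playII σ x i p = playII σ x k p

/-! Player II answers each move of I by the Skolem functions applied to that move alone, so the
round-`k` values form the assignment `(x k, f (x k))` of the full team; `ψ` and the uniformity
clauses of the game are then instances of the corresponding conditions on the team. -/

theorem List.getLastD_map_range {α : Type*} (x : ℕ → α) (k : ℕ) (d : α) :
    ((List.range (k + 1)).map x).getLastD d = x k := by
  simp [List.getLastD_eq_getLast?, List.getLast?_map, List.range_succ]

/-- The default `a₀` is never consulted in a play: there I has always moved at least once. -/
def lastMoveStrategy (f : (Fin m → A) → Fin n → A) (a₀ : Fin m → A) :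
    List (Fin m → A) → Fin n → A :=
  fun l => f (l.getLastD a₀)

theorem playII_lastMoveStrategy (f : (Fin m → A) → Fin n → A) (a₀ : Fin m → A)
    (x : ℕ → Fin m → A) (k : ℕ) : playII (lastMoveStrategy f a₀) x k = f (x k) := by
  rw [playII, lastMoveStrategy, List.getLastD_map_range]

theorem winningII_lastMoveStrategy {ψ : (Fin m → A) → (Fin n → A) → Prop}
    {wIdx : Fin n → List (Fin m ⊕ Fin n)} {f : (Fin m → A) → Fin n → A} (a₀ : Fin m → A)
    (hψ : ∀ a, ψ a (f a))
    (hdep : ∀ p a a', wVal wIdx p a (f a) = wVal wIdx p a' (f a') → f a p = f a' p) :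
    WinningII ψ wIdx (lastMoveStrategy f a₀) := by
  intro x k
  simp only [playII_lastMoveStrategy]
  exact ⟨hψ (x k), fun i _ p => hdep p (x i) (x k)⟩

theorem teamTrue_winningII_general [Nonempty A]
    (ψ : (Fin m → A) → (Fin n → A) → Prop)
    (wIdx : Fin n → List (Fin m ⊕ Fin n))
    (h : TeamTrue ψ wIdx) :
    ∃ σ : List (Fin m → A) → (Fin n → A), WinningII ψ wIdx σ := by
  obtain ⟨f, hψ, hdep⟩ := h
  exact ⟨_, winningII_lastMoveStrategy (Classical.arbitrary _) hψ hdep⟩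

/-- If the normal-form sentence `φ` is true in `𝔄` (team semantics), then
player II has a winning strategy in the game `G(𝔄, Φ)`. -/
theorem teamTrue_winningII [Nonempty A]
    (ψ : (Fin m → A) → (Fin n → A) → Prop)
    (wIdx : Fin n → List (Fin m ⊕ Fin n)) (hwf : WF wIdx)
    (h : TeamTrue ψ wIdx) :
    ∃ σ : List (Fin m → A) → (Fin n → A), WinningII ψ wIdx σ :=
  teamTrue_winningII_general ψ wIdx h
end

section
/- Conversely, if 𝔄 is a countable model and player II has a winning strategy in the game G(𝔄,Φ) associated with φ = ∀x⃗ ∃y⃗ (⋀ⱼ =(w⃗^{iⱼ}, y_{iⱼ}) ∧ ψ(x⃗,y⃗)), then 𝔄 ⊨ φ in team semantics. -/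
/-
Setting for the game-expression analysis of a dependence logic sentence in
normal form  φ = ∀x⃗ ∃y⃗ (⋀ⱼ =(w⃗^{iⱼ}, y_{iⱼ}) ∧ ψ(x⃗, y⃗)):
`A` is the (nonempty) domain, `m` the length of `x⃗`, `n` the length of `y⃗`,
`ψ` the quantifier-free first-order matrix (abstracted as a predicate on
tuples), and for each `p : Fin n` the tuple `w⃗^p` of the set `S` is given by
a list `wIdx p` of variables, each either some `xᵢ` (`Sum.inl i`) or some
earlier `y_q` (`Sum.inr q` with `q < p`; this constraint is `WF wIdx`).
-/

variable {A : Type*} {m n : ℕ}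

namespace WinningII

variable {ψ : (Fin m → A) → (Fin n → A) → Prop} {wIdx : Fin n → List (Fin m ⊕ Fin n)}
  {σ : List (Fin m → A) → (Fin n → A)}

theorem playII_eq_of_wVal_eq (hσ : WinningII ψ wIdx σ) (x : ℕ → Fin m → A) {i j : ℕ}
    (p : Fin n) (hval : wVal wIdx p (x i) (playII σ x i) = wVal wIdx p (x j) (playII σ x j)) :
    playII σ x i p = playII σ x j p := by
  rcases lt_trichotomy i j with hij | rfl | hij
  · exact (hσ x j).2 i hij p hval
  · rfl
  · exact ((hσ x i).2 j hij p hval.symm).symm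

/-- A single play in which player I eventually plays every tuple yields Skolem functions:
answer `a` as II does at some round where I plays `a`. -/
theorem teamTrue_of_surjective (hσ : WinningII ψ wIdx σ) {x : ℕ → Fin m → A}
    (hx : Function.Surjective x) : TeamTrue ψ wIdx := by
  refine ⟨fun a => playII σ x (Function.surjInv hx a), fun a => ?_, fun p a a' hval => ?_⟩
  · simpa only [Function.surjInv_eq hx a] using (hσ x (Function.surjInv hx a)).1
  · apply hσ.playII_eq_of_wVal_eq x p
    rwa [Function.surjInv_eq hx, Function.surjInv_eq hx]

end WinningII

theorem winningII_teamTrue_general [Nonempty A] [Countable A]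
    (ψ : (Fin m → A) → (Fin n → A) → Prop)
    (wIdx : Fin n → List (Fin m ⊕ Fin n))
    (h : ∃ σ : List (Fin m → A) → (Fin n → A), WinningII ψ wIdx σ) :
    TeamTrue ψ wIdx := by
  obtain ⟨σ, hσ⟩ := h
  obtain ⟨x, hx⟩ := exists_surjective_nat (Fin m → A)
  exact hσ.teamTrue_of_surjective hx

/-- Conversely, over a countable domain, if player II has a winning strategy
in the game `G(𝔄, Φ)`, then the normal-form sentence `φ` is true in `𝔄`
(team semantics). -/
theorem winningII_teamTrue [Nonempty A] [Countable A]
    (ψ : (Fin m → A) → (Fin n → A) → Prop)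
    (wIdx : Fin n → List (Fin m ⊕ Fin n)) (hwf : WF wIdx)
    (h : ∃ σ : List (Fin m → A) → (Fin n → A), WinningII ψ wIdx σ) :
    TeamTrue ψ wIdx :=
  winningII_teamTrue_general ψ wIdx h
end

section
/- In a finite structure 𝔄, if 𝔄 satisfies the n-th approximation Φⁿ for every n ∈ ℕ, then player II has a winning strategy in the infinite game G(𝔄,Φ) (and hence 𝔄 satisfies the game expression Φ). -/
/-
Setting for the game-expression analysis of a dependence logic sentence in
normal form  φ = ∀x⃗ ∃y⃗ (⋀ⱼ =(w⃗^{iⱼ}, y_{iⱼ}) ∧ ψ(x⃗, y⃗)):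
`A` is the (nonempty) domain, `m` the length of `x⃗`, `n` the length of `y⃗`,
`ψ` the quantifier-free first-order matrix (abstracted as a predicate on
tuples), and for each `p : Fin n` the tuple `w⃗^p` of the set `S` is given by
a list `wIdx p` of variables, each either some `xᵢ` (`Sum.inl i`) or some
earlier `y_q` (`Sum.inr q` with `q < p`; this constraint is `WF wIdx`).
-/

variable {A : Type*} {m n : ℕ}

/-- A finite history of the game is good if `ψ` holds at each round and all
pairwise uniformity clauses between rounds hold. -/
def Good (ψ : (Fin m → A) → (Fin n → A) → Prop)
    (wIdx : Fin n → List (Fin m ⊕ Fin n))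
    (hist : List ((Fin m → A) × (Fin n → A))) : Prop :=
  (∀ pr ∈ hist, ψ pr.1 pr.2) ∧
  ∀ i j : Fin hist.length, (i : ℕ) < (j : ℕ) → ∀ p : Fin n,
    wVal wIdx p (hist.get i).1 (hist.get i).2 =
      wVal wIdx p (hist.get j).1 (hist.get j).2 →
    (hist.get i).2 p = (hist.get j).2 p

/-- `Survive ψ wIdx k hist` says that from the position `hist` player II can
survive `k` more rounds; `Survive ψ wIdx k []` is exactly the truth (in
ordinary first-order semantics) of the `k`-th approximation `Φᵏ`. -/
def Survive (ψ : (Fin m → A) → (Fin n → A) → Prop)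
    (wIdx : Fin n → List (Fin m ⊕ Fin n)) :
    ℕ → List ((Fin m → A) × (Fin n → A)) → Prop
  | 0, _ => True
  | k + 1, hist => ∀ a : Fin m → A, ∃ b : Fin n → A,
      Good ψ wIdx (hist ++ [(a, b)]) ∧ Survive ψ wIdx k (hist ++ [(a, b)])

/-!
II keeps the position safe, i.e. from it she can survive `k` more rounds for every `k`. The empty
position is safe by hypothesis. From a safe position, for each `k` some answer to I's move keeps
the position good and survivable for `k` more rounds; as there are only finitely many answers, one
of them works for infinitely many `k`, hence (survival being antitone in `k`) for all `k`. Playing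
such an answer every round, every finite part of every play is good, which is what winning means.
-/

section History

variable {α β : Type*} (st : List (α × β) → α → β)

def history (l : List α) : List (α × β) :=
  l.foldl (fun hist a => hist ++ [(a, st hist a)]) []

/-- `b₀` is only the answer to the empty sequence of moves, which never occurs in a play. -/
def respond (b₀ : β) (l : List α) : β :=
  (history st l).getLast?.elim b₀ Prod.snd

@[simp]
lemma history_append_singleton (l : List α) (a : α) :
    history st (l ++ [a]) = history st l ++ [(a, st (history st l) a)] := by
  simp [history, List.foldl_append]

lemma respond_append_singleton (b₀ : β) (l : List α) (a : α) :
    respond st b₀ (l ++ [a]) = st (history st l) a := by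
  simp [respond]

lemma history_induction {P : List (α × β) → Prop} (h₀ : P [])
    (hstep : ∀ hist a, P hist → P (hist ++ [(a, st hist a)])) (l : List α) :
    P (history st l) := by
  induction l using List.reverseRecOn with
  | nil => exact h₀
  | append_singleton l a ih => simpa using hstep _ a ih

end History

section Game

variable {ψ : (Fin m → A) → (Fin n → A) → Prop} {wIdx : Fin n → List (Fin m ⊕ Fin n)}

lemma history_range_map
    (st : List ((Fin m → A) × (Fin n → A)) → (Fin m → A) → (Fin n → A)) (b₀ : Fin n → A) (x : ℕ → Fin m → A) (k : ℕ) :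
    history st ((List.range k).map x) =
      (List.range k).map fun i => (x i, playII (respond st b₀) x i) := by
  induction k with
  | zero => rfl
  | succ k ih =>
    simp only [List.range_succ, List.map_append, List.map_singleton, history_append_singleton,
      ih]
    rw [playII, List.range_succ, List.map_append, List.map_singleton, respond_append_singleton,
      ih]

lemma winningII_of_forall_good {σ : List (Fin m → A) → (Fin n → A)}
    (h : ∀ x k, Good ψ wIdx ((List.range (k + 1)).map fun i => (x i, playII σ x i))) :
    WinningII ψ wIdx σ := by
  intro x k
  obtain ⟨hψ, huniform⟩ := h x k
  refine ⟨hψ _ (List.mem_map.2 ⟨k, by simp, rfl⟩), fun i hik p hw => ?_⟩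
  have hi : i < ((List.range (k + 1)).map fun i => (x i, playII σ x i)).length := by
    simp only [List.length_map, List.length_range]; omega
  simpa using huniform ⟨i, hi⟩ ⟨k, by simp⟩ hik p (by simpa using hw)

lemma Survive.of_le {k k' : ℕ} (hk : k ≤ k') {hist : List ((Fin m → A) × (Fin n → A))}
    (h : Survive ψ wIdx k' hist) : Survive ψ wIdx k hist := by
  induction k generalizing k' hist with
  | zero => trivial
  | succ k ih =>
    obtain _ | k' := k'
    · omega
    intro a
    obtain ⟨b, hgood, hsurv⟩ := h a
    exact ⟨b, hgood, ih (by omega) hsurv⟩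

/-- König's lemma for the finitely branching tree of positions. -/
lemma exists_good_forall_survive_append [Finite A] {hist : List ((Fin m → A) × (Fin n → A))}
    (hsafe : ∀ k, Survive ψ wIdx k hist) (a : Fin m → A) :
    ∃ b, Good ψ wIdx (hist ++ [(a, b)]) ∧ ∀ k, Survive ψ wIdx k (hist ++ [(a, b)]) := by
  choose g hgood hsurv using fun k => hsafe (k + 1) a
  obtain ⟨b, hb⟩ := Finite.exists_infinite_fiber g
  have hfiber : (g ⁻¹' {b}).Infinite := Set.infinite_coe_iff.mp hb
  obtain ⟨j₀, hj₀ : g j₀ = b, -⟩ := hfiber.exists_gt 0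
  refine ⟨b, hj₀ ▸ hgood j₀, fun k => ?_⟩
  obtain ⟨j, hj : g j = b, hkj⟩ := hfiber.exists_gt k
  exact hj ▸ (hsurv j).of_le hkj.le

end Game

theorem approximations_winningII_of_finite_general [Nonempty A] [Finite A]
    (ψ : (Fin m → A) → (Fin n → A) → Prop)
    (wIdx : Fin n → List (Fin m ⊕ Fin n))
    (h : ∀ k : ℕ, Survive ψ wIdx k []) :
    ∃ σ : List (Fin m → A) → (Fin n → A), WinningII ψ wIdx σ := by
  have hanswer : ∀ hist (a : Fin m → A), ∃ b, (∀ k, Survive ψ wIdx k hist) →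
      Good ψ wIdx (hist ++ [(a, b)]) ∧ ∀ k, Survive ψ wIdx k (hist ++ [(a, b)]) := by
    intro hist a
    by_cases hsafe : ∀ k, Survive ψ wIdx k hist
    · obtain ⟨b, hb⟩ := exists_good_forall_survive_append hsafe a
      exact ⟨b, fun _ => hb⟩
    · exact ⟨Classical.arbitrary _, fun h' => absurd h' hsafe⟩
  choose st hst using hanswer
  have hsafe : ∀ l, ∀ k, Survive ψ wIdx k (history st l) :=
    history_induction st h fun hist a hs => (hst hist a hs).2
  refine ⟨respond st (Classical.arbitrary _), winningII_of_forall_good fun x k => ?_⟩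
  rw [← history_range_map, List.range_succ, List.map_append, List.map_singleton,
    history_append_singleton]
  exact (hst _ _ (hsafe _)).1

/-- In a finite structure, if every first-order approximation `Φᵏ` holds,
then player II has a winning strategy in the infinite game `G(𝔄, Φ)`. -/
theorem approximations_winningII_of_finite [Nonempty A] [Finite A]
    (ψ : (Fin m → A) → (Fin n → A) → Prop)
    (wIdx : Fin n → List (Fin m ⊕ Fin n)) (hwf : WF wIdx)
    (h : ∀ k : ℕ, Survive ψ wIdx k []) :
    ∃ σ : List (Fin m → A) → (Fin n → A), WinningII ψ wIdx σ :=
  approximations_winningII_of_finite_general ψ wIdx h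
end
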